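/- For every C ≥ 0 one has the operator inequality (D₀ + (C/2)(β+1))^{-1} ≤ (1/2)[(α·p + β + i√C)^{-1} + (α·p + β − i√C)^{-1}] as self-adjoint bounded operators on L²(ℝ³, ℂ⁴). -/
import Mathlib


open MeasureTheory Matrix
open scoped ComplexOrder

noncomputable section

/-- The three Pauli matrices. -/
def pauli : Fin 3 → Matrix (Fin 2) (Fin 2) ℂ :=
  ![!![0, 1; 1, 0], !![0, -Complex.I; Complex.I, 0], !![1, 0; 0, -1]]

/-- The Dirac matrices `α_j` in the standard representation. -/
def diracAlpha (j : Fin 3) : Matrix (Fin 4) (Fin 4) ℂ :=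
  Matrix.reindex finSumFinEquiv finSumFinEquiv
    (Matrix.fromBlocks (0 : Matrix (Fin 2) (Fin 2) ℂ) (pauli j) (pauli j) 0)

/-- The Dirac matrix `β` in the standard representation. -/
def diracBeta : Matrix (Fin 4) (Fin 4) ℂ :=
  Matrix.reindex finSumFinEquiv finSumFinEquiv
    (Matrix.fromBlocks (1 : Matrix (Fin 2) (Fin 2) ℂ) 0 0 (-1 : Matrix (Fin 2) (Fin 2) ℂ))

/-- The Fourier symbol `α·p + β` of the free Dirac operator `D₀`. -/
def diracSymbol (p : EuclideanSpace ℝ (Fin 3)) : Matrix (Fin 4) (Fin 4) ℂ :=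
  (∑ j : Fin 3, (p j : ℂ) • diracAlpha j) + diracBeta

/-- The Fourier symbol of `D₀ + (C/2)(β+1)`. -/
def shiftedSymbol (C : ℝ) (p : EuclideanSpace ℝ (Fin 3)) : Matrix (Fin 4) (Fin 4) ℂ :=
  diracSymbol p + ((C / 2 : ℝ) : ℂ) • (diracBeta + 1)

/-- The Fourier symbol of `(1/2)[(α·p+β+i√C)⁻¹ + (α·p+β−i√C)⁻¹]`. -/
def avgResolventSymbol (C : ℝ) (p : EuclideanSpace ℝ (Fin 3)) : Matrix (Fin 4) (Fin 4) ℂ :=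
  (1 / 2 : ℂ) • ((diracSymbol p + (Complex.I * (Real.sqrt C : ℂ)) • 1)⁻¹ +
    (diracSymbol p - (Complex.I * (Real.sqrt C : ℂ)) • 1)⁻¹)

lemma hsymm0 : (finSumFinEquiv.symm (0 : Fin 4) : Fin 2 ⊕ Fin 2) = Sum.inl 0 := by decide
lemma hsymm1 : (finSumFinEquiv.symm (1 : Fin 4) : Fin 2 ⊕ Fin 2) = Sum.inl 1 := by decide
lemma hsymm2 : (finSumFinEquiv.symm (2 : Fin 4) : Fin 2 ⊕ Fin 2) = Sum.inr 0 := by decide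
lemma hsymm3 : (finSumFinEquiv.symm (3 : Fin 4) : Fin 2 ⊕ Fin 2) = Sum.inr 1 := by decide

lemma symbol_explicit (p : EuclideanSpace ℝ (Fin 3)) :
    diracSymbol p = !![1, 0, (p 2 : ℂ), (p 0 : ℂ) - Complex.I * (p 1 : ℂ);
      0, 1, (p 0 : ℂ) + Complex.I * (p 1 : ℂ), -(p 2 : ℂ);
      (p 2 : ℂ), (p 0 : ℂ) - Complex.I * (p 1 : ℂ), -1, 0;
      (p 0 : ℂ) + Complex.I * (p 1 : ℂ), -(p 2 : ℂ), 0, -1] := by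
  ext i j
  fin_cases i <;> fin_cases j <;>
    (simp [diracSymbol, diracAlpha, diracBeta, pauli, Fin.sum_univ_three,
      Matrix.reindex_apply, Matrix.submatrix_apply, hsymm0, hsymm1, hsymm2, hsymm3,
      Matrix.vecHead, Matrix.vecTail] <;> try ring)

lemma beta_explicit : diracBeta = !![1, 0, 0, 0; 0, 1, 0, 0; 0, 0, -1, 0; 0, 0, 0, -1] := by
  ext i j
  fin_cases i <;> fin_cases j <;>
    simp [diracBeta, Matrix.reindex_apply, Matrix.submatrix_apply,
      hsymm0, hsymm1, hsymm2, hsymm3, Matrix.one_apply, Matrix.vecHead, Matrix.vecTail]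

set_option maxHeartbeats 1000000 in
lemma dirac_sq (p : EuclideanSpace ℝ (Fin 3)) :
    diracSymbol p * diracSymbol p
      = ((p 0 : ℂ) ^ 2 + (p 1 : ℂ) ^ 2 + (p 2 : ℂ) ^ 2 + 1) • 1 := by
  rw [symbol_explicit]
  ext i j
  fin_cases i <;> fin_cases j
  all_goals simp [Matrix.mul_apply, Fin.sum_univ_four, Matrix.one_apply, Matrix.smul_apply,
      Matrix.vecHead, Matrix.vecTail]
  all_goals ring_nf
  all_goals simp [Complex.I_sq]
  all_goals ring_nf

set_option maxHeartbeats 1000000 in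
lemma dirac_beta_anticomm (p : EuclideanSpace ℝ (Fin 3)) :
    diracSymbol p * diracBeta + diracBeta * diracSymbol p
      = (2 : ℂ) • (1 : Matrix (Fin 4) (Fin 4) ℂ) := by
  rw [symbol_explicit, beta_explicit]
  ext i j
  fin_cases i <;> fin_cases j
  all_goals simp [Matrix.mul_apply, Fin.sum_univ_four, Matrix.one_apply, Matrix.smul_apply,
      Matrix.vecHead, Matrix.vecTail]
  all_goals ring_nf

lemma beta_sq : diracBeta * diracBeta = 1 := by
  rw [beta_explicit]
  ext i j
  fin_cases i <;> fin_cases j <;>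
    simp [Matrix.mul_apply, Fin.sum_univ_four, Matrix.one_apply,
      Matrix.vecHead, Matrix.vecTail]

lemma one_sub_beta : (1 : Matrix (Fin 4) (Fin 4) ℂ) - diracBeta
    = Matrix.diagonal ![0, 0, 2, 2] := by
  rw [beta_explicit]
  ext i j
  fin_cases i <;> fin_cases j <;>
    simp [Matrix.one_apply, Matrix.diagonal, Matrix.vecHead, Matrix.vecTail] <;> norm_num

/-- Abstract resolvent product: if `A² = a•1` then `(A + w•1)(A - w•1) = (a - w²)•1`. -/
lemma key_prod {A : Matrix (Fin 4) (Fin 4) ℂ} {a : ℂ} (h : A * A = a • 1) (w : ℂ) :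
    (A + w • 1) * (A - w • 1) = (a - w * w) • 1 := by
  simp only [add_mul, mul_sub, sub_mul, mul_add, smul_mul_assoc, mul_smul_comm, smul_smul,
    mul_one, one_mul, h]
  module

lemma key_prod' {A : Matrix (Fin 4) (Fin 4) ℂ} {a : ℂ} (h : A * A = a • 1) (w : ℂ) :
    (A - w • 1) * (A + w • 1) = (a - w * w) • 1 := by
  simp only [add_mul, mul_sub, sub_mul, mul_add, smul_mul_assoc, mul_smul_comm, smul_smul,
    mul_one, one_mul, h]
  module

/-- Abstract shifted product. -/
lemma key_shift {A B : Matrix (Fin 4) (Fin 4) ℂ} {a : ℂ} (h : A * A = a • 1)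
    (hbb : B * B = 1) (hab : A * B + B * A = (2 : ℂ) • (1 : Matrix (Fin 4) (Fin 4) ℂ))
    (c : ℂ) :
    (A + c • (B + 1)) * (A + c • (B - 1)) = (a + 2 * c) • 1 := by
  have hBA : B * A = (2 : ℂ) • (1 : Matrix (Fin 4) (Fin 4) ℂ) - A * B := by
    rw [eq_sub_iff_add_eq, add_comm]; exact hab
  simp only [smul_add, smul_sub, add_mul, mul_add, mul_sub, sub_mul, smul_mul_assoc,
    mul_smul_comm, smul_smul, mul_one, one_mul, h, hbb, hBA]
  module

/-- **Relating resolvents, `ε = 0` case of Lemma 10.**  For every `C ≥ 0`,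
`(D₀ + (C/2)(β+1))⁻¹ ≤ (1/2)[(α·p+β+i√C)⁻¹ + (α·p+β−i√C)⁻¹]` as self-adjoint bounded
operators on `L²(ℝ³,ℂ⁴)`; equivalently, the difference of the Fourier symbols is positive
semidefinite at every momentum `p`. -/
theorem stmt_12 (C : ℝ) (hC : 0 ≤ C) (p : EuclideanSpace ℝ (Fin 3)) :
    (avgResolventSymbol C p - (shiftedSymbol C p)⁻¹).PosSemidef := by
  set A := diracSymbol p with hA
  set B := diracBeta with hB
  set s : ℝ := p 0 ^ 2 + p 1 ^ 2 + p 2 ^ 2 with hs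
  have hs0 : 0 ≤ s := by positivity
  have hd0 : (0:ℝ) < s + 1 + C := by linarith
  set a : ℂ := (p 0 : ℂ) ^ 2 + (p 1 : ℂ) ^ 2 + (p 2 : ℂ) ^ 2 + 1 with ha
  have haC : a + (C : ℂ) = ((s + 1 + C : ℝ) : ℂ) := by rw [ha, hs]; push_cast; ring
  set d : ℂ := ((s + 1 + C : ℝ) : ℂ) with hd
  have hdne : d ≠ 0 := by
    simp only [hd, ne_eq, Complex.ofReal_eq_zero]; exact ne_of_gt hd0
  set z : ℂ := Complex.I * (Real.sqrt C : ℂ) with hz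
  have hz2 : z * z = -(C : ℂ) := by
    have h1 : (Real.sqrt C : ℂ) * (Real.sqrt C : ℂ) = (C : ℂ) := by
      rw [← Complex.ofReal_mul, Real.mul_self_sqrt hC]
    calc z * z = Complex.I * Complex.I * ((Real.sqrt C : ℂ) * (Real.sqrt C : ℂ)) := by
          rw [hz]; ring
      _ = -(C:ℂ) := by rw [Complex.I_mul_I, h1]; ring
  have hAA' : A * A = a • 1 := dirac_sq p
  set c : ℂ := ((C / 2 : ℝ) : ℂ) with hc
  have hc2 : a + 2 * c = d := by
    rw [← haC, hc]; push_cast; ring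
  have key1 : (A + z • 1) * (A - z • 1) = d • 1 := by
    rw [key_prod hAA' z, hz2, ← haC]; ring_nf
  have key2 : (A - z • 1) * (A + z • 1) = d • 1 := by
    rw [key_prod' hAA' z, hz2, ← haC]; ring_nf
  have keyM : (A + c • (B + 1)) * (A + c • (B - 1)) = d • 1 := by
    rw [key_shift hAA' beta_sq (dirac_beta_anticomm p) c, hc2]
  have hinv1 : (A + z • 1)⁻¹ = d⁻¹ • (A - z • 1) :=
    Matrix.inv_eq_right_inv (by
      rw [mul_smul_comm, key1, smul_smul, inv_mul_cancel₀ hdne, one_smul])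
  have hinv2 : (A - z • 1)⁻¹ = d⁻¹ • (A + z • 1) :=
    Matrix.inv_eq_right_inv (by
      rw [mul_smul_comm, key2, smul_smul, inv_mul_cancel₀ hdne, one_smul])
  have hinvM : (shiftedSymbol C p)⁻¹ = d⁻¹ • (A + c • (B - 1)) := by
    have hM : shiftedSymbol C p = A + c • (B + 1) := rfl
    rw [hM]
    exact Matrix.inv_eq_right_inv (by
      rw [mul_smul_comm, keyM, smul_smul, inv_mul_cancel₀ hdne, one_smul])
  have hdiff : avgResolventSymbol C p - (shiftedSymbol C p)⁻¹
      = (d⁻¹ * c) • ((1 : Matrix (Fin 4) (Fin 4) ℂ) - B) := by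
    rw [avgResolventSymbol, hinvM, ← hA, ← hz, hinv1, hinv2]
    simp only [smul_add, smul_sub, smul_smul]
    module
  rw [hdiff, hB, one_sub_beta, ← Matrix.diagonal_smul]
  refine Matrix.posSemidef_diagonal_iff.mpr fun i => ?_
  have hnn : (0 : ℂ) ≤ (d⁻¹ * c) * 2 := by
    rw [show (d⁻¹ * c) * 2 = (((s + 1 + C)⁻¹ * (C / 2) * 2 : ℝ) : ℂ) by
      rw [hd, hc]; push_cast; ring, Complex.zero_le_real]
    positivity
  fin_cases i <;> simp [Matrix.vecHead, Matrix.vecTail] <;> exact hnn
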